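/- Fix N ∈ ℕ, x ∈ ℂ^{N×N}, and Λ ⊂ {1,…,N}² with Λ^c ≠ ∅ such that Null(P̃_Λ D) = span{𝟙_{I_j} : j = 1,…,n} for a partition {I_1,…,I_n} of {1,…,N}². Let σ have entries σ_t = (Dx)_t/|(Dx)_t| when (Dx)_t ≠ 0 and 0 otherwise, let f_j = 𝟙_{I_j}/√|I_j| for j = 1,…,n, and let ξ := D* P̃_{Λ^c} σ − ∑_{j=1}^n ⟨D* P̃_{Λ^c} σ, f_j⟩ f_j. Then: (a) for each j = 1,…,n, (√|I_j|/Per(I_j))·|⟨f_j, D* P̃_{Λ^c} σ⟩| ≤ 1; and (b) if ξ ≠ 0, then ‖ξ‖₂^{−1}·|⟨ξ/‖ξ‖₂, D* P̃_{Λ^c} σ⟩| = 1. -/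

import Mathlib

noncomputable section

/-- The pixel grid `{1,…,N}²` (zero-based as `Fin N × Fin N`). -/
abbrev idx (N : ℕ) := Fin N × Fin N

/-- Images `ℂ^{N×N}` with the Euclidean (`ℓ²`) structure. -/
abbrev V (N : ℕ) := EuclideanSpace ℂ (idx N)

/-- The codomain of the discrete gradient: pairs `(D₁x, D₂x)` stacked. -/
abbrev Wsp (N : ℕ) := EuclideanSpace ℂ (idx N ⊕ idx N)

/-- The matrix of the discrete gradient `D = (D₁, D₂)` with zero (Neumann)
boundary: `(D₁x)_{t} = x_{t+e₁} - x_t` for `t₁ < N` and `0` on the last row,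
similarly for `D₂`. -/
def DM (N : ℕ) : Matrix (idx N ⊕ idx N) (idx N) ℂ :=
  Matrix.of fun i j =>
    match i with
    | Sum.inl t => if h : t.1.1 + 1 < N then
        (if j = (⟨t.1.1 + 1, h⟩, t.2) then 1 else if j = t then -1 else 0) else 0
    | Sum.inr t => if h : t.2.1 + 1 < N then
        (if j = (t.1, ⟨t.2.1 + 1, h⟩) then 1 else if j = t then -1 else 0) else 0

/-- The discrete gradient `D : ℂ^{N×N} → ℂ^{N×N} × ℂ^{N×N}` as a linear map. -/
def Dlin (N : ℕ) : V N →ₗ[ℂ] Wsp N := Matrix.toEuclideanLin (DM N)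

/-- Its adjoint `D*`. -/
def Dadj (N : ℕ) : Wsp N →ₗ[ℂ] V N := LinearMap.adjoint (Dlin N)

/-- The "base point" of an index of a gradient pair. -/
def pt {N : ℕ} : idx N ⊕ idx N → idx N := Sum.elim id id

/-- The projection `P̃_Λ` acting componentwise on gradient pairs. -/
def PW (N : ℕ) (Λ : Finset (idx N)) : Wsp N →ₗ[ℂ] Wsp N :=
  Matrix.toEuclideanLin (Matrix.diagonal fun i => if pt i ∈ Λ then (1 : ℂ) else 0)

/-- The Euclidean length `|(Dx)_t|` of the gradient pair of `x` at `t`. -/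
def gradLen (N : ℕ) (x : V N) (t : idx N) : ℝ :=
  Real.sqrt (‖Dlin N x (Sum.inl t)‖ ^ 2 + ‖Dlin N x (Sum.inr t)‖ ^ 2)

open Classical in
/-- The generalized sign `σ` of the gradient: `σ_t = (Dx)_t/|(Dx)_t|` when
`(Dx)_t ≠ 0` and `0` otherwise. -/
def sigma (N : ℕ) (x : V N) : Wsp N :=
  (WithLp.toLp 2 (fun i => if gradLen N x (pt i) = 0 then 0 else
    Dlin N x i / (gradLen N x (pt i) : ℂ)) : EuclideanSpace ℂ (idx N ⊕ idx N))

/-- Indicator vector `𝟙_I ∈ ℂ^{N×N}`. -/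
def ind (N : ℕ) (I : Finset (idx N)) : V N :=
  (WithLp.toLp 2 (fun t => if t ∈ I then 1 else 0) : EuclideanSpace ℂ (idx N))

/-- `Per(I) = ‖𝟙_I‖_{TV,1}`, the anisotropic total variation of the indicator. -/
def Per (N : ℕ) (I : Finset (idx N)) : ℝ := ∑ i, ‖Dlin N (ind N I) i‖

/-- The normalized indicator `f_I = 𝟙_I/√|I|`. -/
def fI (N : ℕ) (I : Finset (idx N)) : V N :=
  (WithLp.toLp 2 (fun t => if t ∈ I then ((Real.sqrt I.card : ℂ))⁻¹ else 0) : EuclideanSpace ℂ (idx N))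

/-- `D* P̃_{Λᶜ} σ`. -/
def vLam (N : ℕ) (Λ : Finset (idx N)) (x : V N) : V N :=
  Dadj N (PW N Λᶜ (sigma N x))

/-- `ξ = D* P̃_{Λᶜ} σ - ∑_j ⟨D* P̃_{Λᶜ} σ, f_j⟩ f_j`. -/
def xi2d (N : ℕ) (Λ : Finset (idx N)) (x : V N) (n : ℕ) (I : Fin n → Finset (idx N)) : V N :=
  vLam N Λ x - ∑ j, (inner ℂ (fI N (I j)) (vLam N Λ x) : ℂ) • fI N (I j)

/-! Every entry of `σ`, hence of `P̃_{Λᶜ} σ`, has modulus at most one, so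
`|⟨𝟙_I, D* P̃_{Λᶜ} σ⟩| = |⟨D 𝟙_I, P̃_{Λᶜ} σ⟩| ≤ ‖D 𝟙_I‖₁ = Per(I)`; dividing by `√|I|` gives (a).
Disjoint nonempty `I_j` make the `f_j` orthonormal, so `ξ` is the component of `D* P̃_{Λᶜ} σ`
orthogonal to their span and `⟨ξ, D* P̃_{Λᶜ} σ⟩ = ‖ξ‖²`, which is (b). -/

open Finset

section InnerProduct

variable {𝕜 E : Type*} [RCLike 𝕜] [NormedAddCommGroup E] [InnerProductSpace 𝕜 E]

theorem Orthonormal.inner_self_sub_sum_inner_smul {ι : Type*} [Fintype ι] {e : ι → E}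
    (he : Orthonormal 𝕜 e) (v : E) :
    inner 𝕜 (v - ∑ i, inner 𝕜 (e i) v • e i) v
      = ((‖v - ∑ i, inner 𝕜 (e i) v • e i‖ : ℝ) : 𝕜) ^ 2 := by
  set ξ := v - ∑ i, inner 𝕜 (e i) v • e i
  have hξ_orth : ∀ j, inner 𝕜 ξ (e j) = 0 := fun j => by
    rw [← inner_conj_symm, inner_sub_right, he.inner_right_fintype, sub_self, map_zero]
  have hv : v = ξ + ∑ i, inner 𝕜 (e i) v • e i := (sub_add_cancel v _).symm
  conv_lhs => rw [hv]
  simp only [inner_add_right, inner_sum, inner_smul_right, hξ_orth, mul_zero, sum_const_zero,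
    add_zero, inner_self_eq_norm_sq_to_K]

theorem norm_inv_mul_norm_inner_normalize_eq_one {ξ v : E} (hξ : ξ ≠ 0)
    (h : inner 𝕜 ξ v = ((‖ξ‖ : ℝ) : 𝕜) ^ 2) :
    ‖ξ‖⁻¹ * ‖inner 𝕜 (((‖ξ‖ : ℝ) : 𝕜)⁻¹ • ξ) v‖ = 1 := by
  have hn : ‖ξ‖ ≠ 0 := norm_ne_zero_iff.mpr hξ
  rw [inner_smul_left, h, map_inv₀, RCLike.conj_ofReal, ← RCLike.ofReal_pow,
    ← RCLike.ofReal_inv, ← RCLike.ofReal_mul, RCLike.norm_ofReal, abs_of_nonneg (by positivity)]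
  field_simp

end InnerProduct

theorem EuclideanSpace.norm_inner_le_sum_norm {𝕜 ι : Type*} [RCLike 𝕜] [Fintype ι]
    (u w : EuclideanSpace 𝕜 ι) (hw : ∀ i, ‖w i‖ ≤ 1) :
    ‖inner 𝕜 u w‖ ≤ ∑ i, ‖u i‖ := by
  rw [PiLp.inner_apply]
  refine (norm_sum_le _ _).trans (sum_le_sum fun i _ => ?_)
  rw [RCLike.inner_apply', norm_mul, RCLike.norm_conj]
  exact mul_le_of_le_one_right (norm_nonneg _) (hw i)

namespace ImageGrid

variable {N : ℕ}

theorem norm_Dlin_le_gradLen (x : V N) (i : idx N ⊕ idx N) :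
    ‖Dlin N x i‖ ≤ gradLen N x (pt i) := by
  apply Real.le_sqrt_of_sq_le
  cases i with
  | inl t => exact le_add_of_nonneg_right (sq_nonneg _)
  | inr t => exact le_add_of_nonneg_left (sq_nonneg _)

theorem norm_sigma_le_one (x : V N) (i : idx N ⊕ idx N) : ‖sigma N x i‖ ≤ 1 := by
  change ‖if gradLen N x (pt i) = 0 then 0 else Dlin N x i / (gradLen N x (pt i) : ℂ)‖ ≤ 1
  split_ifs with h
  · simp
  · have hg : 0 ≤ gradLen N x (pt i) := Real.sqrt_nonneg _
    rw [norm_div, Complex.norm_real, Real.norm_of_nonneg hg]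
    exact div_le_one_of_le₀ (norm_Dlin_le_gradLen x i) hg

theorem PW_apply (Λ : Finset (idx N)) (w : Wsp N) (i : idx N ⊕ idx N) :
    PW N Λ w i = (if pt i ∈ Λ then 1 else 0) * w i :=
  Matrix.mulVec_diagonal _ _ i

theorem norm_PW_sigma_le_one (Λ : Finset (idx N)) (x : V N) (i : idx N ⊕ idx N) :
    ‖PW N Λ (sigma N x) i‖ ≤ 1 := by
  rw [PW_apply]
  split_ifs
  · simpa using norm_sigma_le_one x i
  · simp

theorem norm_inner_ind_vLam_le_Per (Λ : Finset (idx N)) (x : V N) (I : Finset (idx N)) :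
    ‖inner ℂ (ind N I) (vLam N Λ x)‖ ≤ Per N I := by
  rw [vLam, Dadj, LinearMap.adjoint_inner_right]
  exact EuclideanSpace.norm_inner_le_sum_norm _ _ (norm_PW_sigma_le_one Λᶜ x)

theorem fI_eq_smul_ind (I : Finset (idx N)) :
    fI N I = ((Real.sqrt #I : ℝ) : ℂ)⁻¹ • ind N I := by
  ext t
  simp only [fI, ind, PiLp.toLp_apply, PiLp.smul_apply, smul_eq_mul, mul_ite, mul_one, mul_zero]

theorem inner_ind_ind (I J : Finset (idx N)) :
    inner ℂ (ind N I) (ind N J) = #(I ∩ J) := by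
  simp [ind, PiLp.inner_apply, ← ite_and, ← Finset.mem_inter]

theorem orthonormal_fI {n : ℕ} (I : Fin n → Finset (idx N)) (hne : ∀ j, (I j).Nonempty)
    (hdisj : ∀ j l, j ≠ l → Disjoint (I j) (I l)) :
    Orthonormal ℂ fun j => fI N (I j) := by
  rw [orthonormal_iff_ite]
  intro j l
  simp only [fI_eq_smul_ind, inner_smul_left, inner_smul_right, inner_ind_ind]
  split_ifs with h
  · subst h
    have hc : (0 : ℝ) < #(I j) := by exact_mod_cast (hne j).card_pos
    rw [Finset.inter_self, map_inv₀, Complex.conj_ofReal, ← mul_assoc, ← mul_inv, ← Complex.ofReal_mul, Real.mul_self_sqrt hc.le]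
    exact inv_mul_cancel₀ (by exact_mod_cast hc.ne')
  · simp [Finset.disjoint_iff_inter_eq_empty.mp (hdisj j l h)]

theorem sqrt_card_div_Per_mul_norm_inner_fI_vLam_le_one (Λ : Finset (idx N)) (x : V N)
    (I : Finset (idx N)) :
    Real.sqrt #I / Per N I * ‖inner ℂ (fI N I) (vLam N Λ x)‖ ≤ 1 := by
  set s := Real.sqrt #I
  have hPer := norm_inner_ind_vLam_le_Per Λ x I
  have hPer_nonneg : 0 ≤ Per N I := (norm_nonneg _).trans hPer
  rw [fI_eq_smul_ind, inner_smul_left, norm_mul, RCLike.norm_conj, norm_inv, Complex.norm_real,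
    Real.norm_of_nonneg (Real.sqrt_nonneg _)]
  calc s / Per N I * (s⁻¹ * ‖inner ℂ (ind N I) (vLam N Λ x)‖)
      = s * s⁻¹ * (‖inner ℂ (ind N I) (vLam N Λ x)‖ / Per N I) := by ring
    _ ≤ 1 := mul_le_one₀ mul_inv_le_one (by positivity) (div_le_one_of_le₀ hPer hPer_nonneg)

end ImageGrid

open ImageGrid

theorem stmt18_general (N : ℕ) (x : V N) (Λ : Finset (idx N))
    (n : ℕ) (I : Fin n → Finset (idx N))
    (hne : ∀ j, (I j).Nonempty)
    (hdisj : ∀ j l, j ≠ l → Disjoint (I j) (I l)) :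
    (∀ j : Fin n,
      Real.sqrt (I j).card / Per N (I j) *
        ‖(inner ℂ (fI N (I j)) (vLam N Λ x) : ℂ)‖ ≤ 1) ∧
    (xi2d N Λ x n I ≠ 0 →
      ‖xi2d N Λ x n I‖⁻¹ *
        ‖(inner ℂ ((‖xi2d N Λ x n I‖ : ℂ)⁻¹ • xi2d N Λ x n I) (vLam N Λ x) : ℂ)‖ = 1) := by
  exact ⟨fun j => sqrt_card_div_Per_mul_norm_inner_fI_vLam_le_one Λ x (I j),
    fun hξ => norm_inv_mul_norm_inner_normalize_eq_one hξ
      ((orthonormal_fI I hne hdisj).inner_self_sub_sum_inner_smul _)⟩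

theorem stmt18 (N : ℕ) (x : V N) (Λ : Finset (idx N)) (hΛc : Λ ≠ Finset.univ)
    (n : ℕ) (I : Fin n → Finset (idx N))
    (hne : ∀ j, (I j).Nonempty)
    (hdisj : ∀ j l, j ≠ l → Disjoint (I j) (I l))
    (hcover : Finset.univ.biUnion I = (Finset.univ : Finset (idx N)))
    (hnull : LinearMap.ker ((PW N Λ).comp (Dlin N)) =
      Submodule.span ℂ (Set.range fun j => ind N (I j))) :
    (∀ j : Fin n,
      Real.sqrt (I j).card / Per N (I j) *
        ‖(inner ℂ (fI N (I j)) (vLam N Λ x) : ℂ)‖ ≤ 1) ∧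
    (xi2d N Λ x n I ≠ 0 →
      ‖xi2d N Λ x n I‖⁻¹ *
        ‖(inner ℂ ((‖xi2d N Λ x n I‖ : ℂ)⁻¹ • xi2d N Λ x n I) (vLam N Λ x) : ℂ)‖ = 1) :=
  stmt18_general N x Λ n I hne hdisj

end
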